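/- Let c > 0 and n ∈ ℤ with n ≠ 0. Suppose u : ℝ → ℂ is a C² function such that u, u' and u'' are square-integrable on ℝ, and u satisfies −u''(x) + i·n·u(x) − 2·(Q_c(x)·u(x))' = 0 for all x ∈ ℝ. Then u ≡ 0. -/

import Mathlib

open MeasureTheory Real Filter

lemma aux_abs_tanh_le_one (y : ℝ) : |Real.tanh y| ≤ 1 := by
  rw [Real.tanh_eq_sinh_div_cosh, abs_div, abs_of_pos (Real.cosh_pos y),
    div_le_one (Real.cosh_pos y)]
  nlinarith [Real.cosh_sq y, abs_nonneg (Real.sinh y), sq_abs (Real.sinh y), Real.cosh_pos y]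

lemma aux_hasDerivAt_tanh (y : ℝ) : HasDerivAt Real.tanh (1 - Real.tanh y ^ 2) y := by
  have h := (Real.hasDerivAt_sinh y).div (Real.hasDerivAt_cosh y) (Real.cosh_pos y).ne'
  have hfun : Real.tanh = fun z => Real.sinh z / Real.cosh z :=
    funext Real.tanh_eq_sinh_div_cosh
  rw [hfun]
  refine h.congr_deriv (Eq.symm ?_)
  have hc := (Real.cosh_pos y).ne'
  field_simp

lemma aux_continuous_tanh : Continuous Real.tanh := by
  have hfun : Real.tanh = fun z => Real.sinh z / Real.cosh z :=
    funext Real.tanh_eq_sinh_div_cosh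
  rw [hfun]
  exact Real.continuous_sinh.div Real.continuous_cosh fun x => (Real.cosh_pos x).ne'

lemma aux_cs (a b c d : ℝ) : |2*(a*c + b*d)| ≤ (a^2+b^2) + (c^2+d^2) := by
  rw [abs_le]
  constructor <;> nlinarith [sq_nonneg (a-c), sq_nonneg (b-d), sq_nonneg (a+c), sq_nonneg (b+d)]

lemma aux_key (nr k : ℝ) (A B : ℂ) :
    ((((nr:ℂ))*Complex.I*A - 2*((k:ℂ)*B)) * (starRingEnd ℂ) A + B * (starRingEnd ℂ) B).re
      = Complex.normSq B - 2*k*(B*(starRingEnd ℂ) A).re := by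
  simp only [Complex.add_re, Complex.sub_re, Complex.mul_re, Complex.mul_im,
    Complex.I_re, Complex.I_im, Complex.ofReal_re, Complex.ofReal_im,
    Complex.conj_re, Complex.conj_im, Complex.normSq_apply, Complex.re_ofNat,
    Complex.im_ofNat, Complex.sub_im, Complex.add_im]
  ring

lemma aux_limit_atTop {h : ℝ → ℝ} {L : ℝ} (hint : Integrable h)
    (hl : Tendsto h atTop (nhds L)) : L = 0 := by
  by_contra hL
  have hε : 0 < |L| / 2 := by positivity
  have h2 : ∀ᶠ x in atTop, |L| / 2 ≤ |h x| := by
    filter_upwards [hl.abs.eventually (eventually_gt_nhds (by linarith : |L|/2 < |L|))] with x hx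
    exact hx.le
  obtain ⟨A, hA⟩ := eventually_atTop.mp h2
  have hlt := (hint.abs).measure_ge_lt_top hε
  have hsub : Set.Ici A ⊆ {x | |L|/2 ≤ |h x|} := fun x hx => hA x hx
  have := measure_mono (μ := volume) hsub
  rw [Real.volume_Ici] at this
  exact absurd (lt_of_le_of_lt this hlt) (by simp)

lemma aux_limit_atBot {h : ℝ → ℝ} {L : ℝ} (hint : Integrable h)
    (hl : Tendsto h atBot (nhds L)) : L = 0 := by
  have hcomp : Tendsto (fun x => h (-x)) atTop (nhds L) := hl.comp tendsto_neg_atTop_atBot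
  exact aux_limit_atTop hint.comp_neg hcomp

lemma aux_tendsto_zero {h h' : ℝ → ℝ} (hd : ∀ x, HasDerivAt h (h' x) x)
    (hint : Integrable h) (hint' : Integrable h') :
    Tendsto h atTop (nhds 0) ∧ Tendsto h atBot (nhds 0) := by
  have hFTC : ∀ x : ℝ, ∫ t in (0:ℝ)..x, h' t = h x - h 0 := fun x =>
    intervalIntegral.integral_eq_sub_of_hasDerivAt (fun t _ => hd t) hint'.intervalIntegrable
  constructor
  · have h1 : Tendsto (fun x : ℝ => ∫ t in (0:ℝ)..x, h' t) atTop
        (nhds (∫ t in Set.Ioi (0:ℝ), h' t)) :=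
      intervalIntegral_tendsto_integral_Ioi 0 hint'.integrableOn tendsto_id
    have h2 : Tendsto h atTop (nhds ((∫ t in Set.Ioi (0:ℝ), h' t) + h 0)) := by
      have := h1.add_const (h 0)
      refine this.congr fun x => ?_
      rw [hFTC x]; ring
    have hz := aux_limit_atTop hint h2
    rwa [hz] at h2
  · have h1 : Tendsto (fun x : ℝ => ∫ t in x..(0:ℝ), h' t) atBot
        (nhds (∫ t in Set.Iic (0:ℝ), h' t)) :=
      intervalIntegral_tendsto_integral_Iic 0 hint'.integrableOn tendsto_id
    have h2 : Tendsto h atBot (nhds (h 0 - ∫ t in Set.Iic (0:ℝ), h' t)) := by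
      have := (h1.const_sub (h 0))
      refine this.congr fun x => ?_
      rw [intervalIntegral.integral_symm, hFTC x]; ring
    have hz := aux_limit_atBot hint h2
    rwa [hz] at h2

/-- The kink profile `Q_c(x) = √(c/2) · tanh(√(c/2)·x)`. -/
noncomputable def kinkProfile (c x : ℝ) : ℝ := Real.sqrt (c / 2) * Real.tanh (Real.sqrt (c / 2) * x)

/-- For `n ≠ 0`, the `n`-th transverse Fourier mode of `𝓛_c u = 0` has no nontrivial `L²`
solution: if `u : ℝ → ℂ` is `C²` with `u, u', u'' ∈ L²` and `−u'' + i n u − 2 (Q_c u)' = 0`,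
then `u ≡ 0`. -/
theorem fourier_mode_mathcalLc_trivial (c : ℝ) (hc : 0 < c) (n : ℤ) (hn : n ≠ 0) (u : ℝ → ℂ)
    (hreg : ContDiff ℝ 2 u)
    (hu : MemLp u 2 volume)
    (hu' : MemLp (deriv u) 2 volume)
    (hu'' : MemLp (deriv (deriv u)) 2 volume)
    (heq : ∀ x : ℝ,
      -deriv (deriv u) x + (n : ℂ) * Complex.I * u x
        - 2 * deriv (fun t => (kinkProfile c t : ℂ) * u t) x = 0) :
    ∀ x : ℝ, u x = 0 := by
  set α := Real.sqrt (c/2) with hαdef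
  have hα : 0 < α := Real.sqrt_pos.mpr (by linarith)
  set Q' : ℝ → ℝ := fun x => α^2 * (1 - Real.tanh (α*x)^2) with hQ'def
  -- basic facts about u
  have hdiff : Differentiable ℝ u := hreg.differentiable (by norm_num)
  have h21 : (2 : WithTop ℕ∞) = 1 + 1 := by norm_num
  have hcd1 : ContDiff ℝ 1 (deriv u) := by
    have := contDiff_succ_iff_deriv.mp (h21 ▸ hreg)
    exact this.2.2
  have hu1d : ∀ x, HasDerivAt u (deriv u x) x := fun x => (hdiff x).hasDerivAt
  have hu2d : ∀ x, HasDerivAt (deriv u) (deriv (deriv u) x) x := fun x =>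
    ((hcd1.differentiable one_ne_zero) x).hasDerivAt
  have hu_cont : Continuous u := hreg.continuous
  have hu1_cont : Continuous (deriv u) := hcd1.continuous
  -- facts about the kink profile
  have hQd : ∀ x, HasDerivAt (kinkProfile c) (Q' x) x := by
    intro x
    have h1 : HasDerivAt (fun x : ℝ => α * x) α x := by
      simpa using (hasDerivAt_id x).const_mul α
    have h2 := (aux_hasDerivAt_tanh (α*x)).comp x h1
    have h3 : HasDerivAt (fun y => α * Real.tanh (α * y)) (Q' x) x := by
      have h4 := h2.const_mul α
      simp only [Function.comp_def] at h4
      refine h4.congr_deriv (Eq.symm ?_)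
      simp only [hQ'def]; ring
    exact h3
  have hQ'nonneg : ∀ x, 0 ≤ Q' x := by
    intro x
    have h0 := aux_abs_tanh_le_one (α*x)
    have h1 : Real.tanh (α*x)^2 ≤ 1 := by
      nlinarith [sq_abs (Real.tanh (α*x)), abs_nonneg (Real.tanh (α*x))]
    have : (0:ℝ) ≤ 1 - Real.tanh (α*x)^2 := by linarith
    positivity
  have hQabs : ∀ x, |kinkProfile c x| ≤ α := by
    intro x
    rw [kinkProfile, abs_mul, abs_of_pos hα]
    calc α * |Real.tanh (α*x)| ≤ α * 1 :=
          mul_le_mul_of_nonneg_left (aux_abs_tanh_le_one _) hα.le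
      _ = α := mul_one α
  have hQcont : Continuous (kinkProfile c) := by
    unfold kinkProfile
    exact continuous_const.mul (aux_continuous_tanh.comp (continuous_const.mul continuous_id))
  have hQ'cont : Continuous Q' := by
    rw [hQ'def]
    exact continuous_const.mul (continuous_const.sub
      ((aux_continuous_tanh.comp (continuous_const.mul continuous_id)).pow 2))
  -- rewriting the equation
  have hQCd : ∀ x, HasDerivAt (fun t => (kinkProfile c t : ℂ) * u t)
      ((Q' x : ℂ) * u x + (kinkProfile c x : ℂ) * deriv u x) x := fun x =>
    ((hQd x).ofReal_comp).mul (hu1d x)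
  have hEQ : ∀ x, deriv (deriv u) x + 2*((Q' x : ℂ) * u x + (kinkProfile c x : ℂ) * deriv u x)
      = (n : ℂ) * Complex.I * u x := by
    intro x
    have h := heq x
    rw [(hQCd x).deriv] at h
    linear_combination -h
  -- the antiderivative v of u
  have hnI : ((n:ℂ) * Complex.I) ≠ 0 :=
    mul_ne_zero (by exact_mod_cast hn) Complex.I_ne_zero
  set v : ℝ → ℂ := fun x => ((n:ℂ)*Complex.I)⁻¹ *
    (deriv u x + 2*((kinkProfile c x : ℂ) * u x)) with hvdef
  have hvd : ∀ x, HasDerivAt v (u x) x := by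
    intro x
    have hnum : HasDerivAt (fun x => deriv u x + 2*((kinkProfile c x : ℂ) * u x))
        (deriv (deriv u) x + 2*((Q' x : ℂ) * u x + (kinkProfile c x : ℂ) * deriv u x)) x :=
      (hu2d x).add ((hQCd x).const_mul 2)
    have h2 := hnum.const_mul ((n:ℂ)*Complex.I)⁻¹
    rw [hEQ x] at h2
    refine h2.congr_deriv (Eq.symm ?_)
    field_simp
  have hvid : ∀ x, deriv u x = (n:ℂ)*Complex.I*v x - 2*((kinkProfile c x : ℂ) * u x) := by
    intro x
    rw [hvdef]
    field_simp
    ring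
  have hv_cont : Continuous v := by
    apply continuous_const.mul
    exact hu1_cont.add (continuous_const.mul
      ((Complex.continuous_ofReal.comp hQcont).mul hu_cont))
  -- the scalar quantities
  set φ : ℝ → ℝ := fun x => (u x * (starRingEnd ℂ) (v x)).re with hφdef
  set g : ℝ → ℝ := fun x => Complex.normSq (v x) with hgdef
  set Nu : ℝ → ℝ := fun x => Complex.normSq (u x) with hNudef
  have hre : ∀ (f : ℝ → ℂ) (f' : ℂ) (x : ℝ), HasDerivAt f f' x →
      HasDerivAt (fun y => (f y).re) f'.re x := by
    intro f f' x hf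
    exact (Complex.reCLM.hasFDerivAt.comp_hasDerivAt x hf)
  have hstar : ∀ x, HasDerivAt (fun y => (starRingEnd ℂ) (v y)) ((starRingEnd ℂ) (u x)) x := by
    intro x
    simpa using (hvd x).star
  have hstaru : ∀ x, HasDerivAt (fun y => (starRingEnd ℂ) (u y))
      ((starRingEnd ℂ) (deriv u x)) x := by
    intro x
    simpa using (hu1d x).star
  have hgd : ∀ x, HasDerivAt g (2 * φ x) x := by
    intro x
    have h1 := (hvd x).mul (hstar x)
    have h2 := hre (fun y => v y * (starRingEnd ℂ) (v y)) _ x h1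
    have hfun : (fun y => (v y * (starRingEnd ℂ) (v y)).re) = g := by
      funext y; rw [Complex.mul_conj]; simp [hgdef]
    rw [hfun] at h2
    refine h2.congr_deriv (Eq.symm ?_)
    simp only [hφdef, Complex.add_re, Complex.mul_re, Complex.conj_re, Complex.conj_im]
    ring
  have hNud : ∀ x, HasDerivAt Nu (2 * (deriv u x * (starRingEnd ℂ) (u x)).re) x := by
    intro x
    have h1 := (hu1d x).mul (hstaru x)
    have h2 := hre (fun y => u y * (starRingEnd ℂ) (u y)) _ x h1
    have hfun : (fun y => (u y * (starRingEnd ℂ) (u y)).re) = Nu := by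
      funext y; rw [Complex.mul_conj]; simp [hNudef]
    rw [hfun] at h2
    refine h2.congr_deriv (Eq.symm ?_)
    simp only [Complex.add_re, Complex.mul_re, Complex.conj_re, Complex.conj_im]
    ring
  have hφd : ∀ x, HasDerivAt φ (Nu x - 2 * kinkProfile c x * φ x) x := by
    intro x
    have h1 := (hu1d x).mul (hstar x)
    have h2 := hre (fun y => u y * (starRingEnd ℂ) (v y)) _ x h1
    refine h2.congr_deriv (Eq.symm ?_)
    rw [hvid x]
    have hcast : ((n:ℂ)) = (((n:ℝ)):ℂ) := by push_cast; rfl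
    rw [hcast]
    exact (aux_key (n:ℝ) (kinkProfile c x) (v x) (u x)).symm
  -- integrability
  have sq_int : ∀ f : ℝ → ℂ, MemLp f 2 volume → Integrable (fun x => Complex.normSq (f x)) := by
    intro f hf
    have h := (memLp_two_iff_integrable_sq_norm hf.aestronglyMeasurable).mp hf
    have hfun : (fun x => Complex.normSq (f x)) = fun x => ‖f x‖^2 := by
      funext x
      rw [Complex.normSq_eq_norm_sq]
    rw [hfun]; exact h
  have hNu_int : Integrable Nu := by rw [hNudef]; exact sq_int u hu
  have hNu1_int : Integrable (fun x => Complex.normSq (deriv u x)) := sq_int _ hu'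
  have hv_mem : MemLp v 2 volume := by
    have hQu_mem : MemLp (fun x => 2*((kinkProfile c x : ℂ) * u x)) 2 volume := by
      refine hu.of_le_mul (c := 2*α) ?_ ?_
      · exact (Continuous.aestronglyMeasurable (by
          exact continuous_const.mul ((Complex.continuous_ofReal.comp hQcont).mul hu_cont)))
      · refine Filter.Eventually.of_forall fun x => ?_
        have h2 : ‖(2:ℂ)*((kinkProfile c x : ℂ) * u x)‖
            = 2 * (|kinkProfile c x| * ‖u x‖) := by
          rw [norm_mul, norm_mul, Complex.norm_real, Real.norm_eq_abs, Complex.norm_ofNat]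
        rw [h2, mul_assoc]
        have := hQabs x
        have hn0 : (0:ℝ) ≤ ‖u x‖ := norm_nonneg _
        nlinarith
    have hmem := (hu'.add hQu_mem).const_mul (((n:ℂ)*Complex.I)⁻¹)
    refine MemLp.ae_eq (Filter.Eventually.of_forall fun x => ?_) hmem
    simp [hvdef]
  have hNv_int : Integrable g := by rw [hgdef]; exact sq_int v hv_mem
  -- decay of Nu
  have habs_nu : ∀ x, |2 * (deriv u x * (starRingEnd ℂ) (u x)).re|
      ≤ Complex.normSq (deriv u x) + Nu x := by
    intro x
    rw [hNudef]
    have := aux_cs (deriv u x).re (deriv u x).im (u x).re (u x).im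
    simpa [Complex.mul_re, Complex.conj_re, Complex.conj_im, Complex.normSq_apply, sq,
      mul_comm, mul_assoc, mul_left_comm, sub_neg_eq_add] using this
  have hDnu_int : Integrable (fun x => 2 * (deriv u x * (starRingEnd ℂ) (u x)).re) := by
    refine Integrable.mono' (hNu1_int.add hNu_int) ?_ ?_
    · exact (Continuous.aestronglyMeasurable (by
        exact (continuous_const.mul (Complex.continuous_re.comp
          ((hu1_cont.mul (continuous_star.comp hu_cont)))))))
    · exact Filter.Eventually.of_forall fun x => by
        rw [Real.norm_eq_abs]; exact habs_nu x
  obtain ⟨hNu_top, hNu_bot⟩ := aux_tendsto_zero hNud hNu_int hDnu_int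
  -- decay of g
  have habs_g : ∀ x, |2 * φ x| ≤ Nu x + g x := by
    intro x
    rw [hNudef, hgdef, hφdef]
    have := aux_cs (u x).re (u x).im (v x).re (v x).im
    simpa [Complex.mul_re, Complex.conj_re, Complex.conj_im, Complex.normSq_apply, sq,
      sub_neg_eq_add] using this
  have hφ_cont : Continuous φ := by
    rw [hφdef]
    exact Complex.continuous_re.comp (hu_cont.mul (continuous_star.comp hv_cont))
  have hDg_int : Integrable (fun x => 2 * φ x) := by
    refine Integrable.mono' (hNu_int.add hNv_int) ?_ ?_
    · exact (continuous_const.mul hφ_cont).aestronglyMeasurable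
    · exact Filter.Eventually.of_forall fun x => by
        rw [Real.norm_eq_abs]; exact habs_g x
  obtain ⟨hNv_top, hNv_bot⟩ := aux_tendsto_zero hgd hNv_int hDg_int
  -- limits of φ and Q·g
  have hφbound : ∀ x, ‖φ x‖ ≤ (fun x => (Nu x + g x)/2) x := by
    intro x
    have := habs_g x
    rw [Real.norm_eq_abs]
    rw [abs_mul] at this
    simp only
    rw [abs_two] at this
    linarith [abs_nonneg (φ x)]
  have hφ_top : Tendsto φ atTop (nhds 0) := by
    refine squeeze_zero_norm hφbound ?_
    simpa using (hNu_top.add hNv_top).div_const 2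
  have hφ_bot : Tendsto φ atBot (nhds 0) := by
    refine squeeze_zero_norm hφbound ?_
    simpa using (hNu_bot.add hNv_bot).div_const 2
  have hQg_bound : ∀ x, ‖kinkProfile c x * g x‖ ≤ (fun x => α * g x) x := by
    intro x
    rw [Real.norm_eq_abs, abs_mul]
    have hg0 : 0 ≤ g x := by rw [hgdef]; exact Complex.normSq_nonneg _
    rw [abs_of_nonneg hg0]
    exact mul_le_mul_of_nonneg_right (hQabs x) hg0
  have hQg_top : Tendsto (fun x => kinkProfile c x * g x) atTop (nhds 0) := by
    refine squeeze_zero_norm hQg_bound ?_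
    simpa using hNv_top.const_mul α
  have hQg_bot : Tendsto (fun x => kinkProfile c x * g x) atBot (nhds 0) := by
    refine squeeze_zero_norm hQg_bound ?_
    simpa using hNv_bot.const_mul α
  -- the interval inequality
  have hNu_cont : Continuous Nu := by rw [hNudef]; exact Complex.continuous_normSq.comp hu_cont
  have hg_cont : Continuous g := by rw [hgdef]; exact Complex.continuous_normSq.comp hv_cont
  have key : ∀ a b : ℝ, a ≤ b → ∫ x in a..b, Nu x
      ≤ φ b - φ a + (kinkProfile c b * g b - kinkProfile c a * g a) := by
    intro a b hab
    have hi1 : IntervalIntegrable Nu volume a b := hNu_cont.intervalIntegrable a b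
    have hi2 : IntervalIntegrable (fun x => 2 * kinkProfile c x * φ x) volume a b :=
      ((continuous_const.mul hQcont).mul hφ_cont).intervalIntegrable a b
    have hi3 : IntervalIntegrable (fun x => Q' x * g x) volume a b :=
      (hQ'cont.mul hg_cont).intervalIntegrable a b
    have E1 : ∫ x in a..b, (Nu x - 2 * kinkProfile c x * φ x) = φ b - φ a :=
      intervalIntegral.integral_eq_sub_of_hasDerivAt (fun t _ => hφd t)
        ((hNu_cont.sub ((continuous_const.mul hQcont).mul hφ_cont)).intervalIntegrable a b)
    have E2 : ∫ x in a..b, (Q' x * g x + 2 * kinkProfile c x * φ x)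
        = kinkProfile c b * g b - kinkProfile c a * g a := by
      have hD : ∀ t, HasDerivAt (fun x => kinkProfile c x * g x)
          (Q' t * g t + 2 * kinkProfile c t * φ t) t := by
        intro t
        have := (hQd t).mul (hgd t)
        refine this.congr_deriv (Eq.symm ?_)
        ring
      exact intervalIntegral.integral_eq_sub_of_hasDerivAt (fun t _ => hD t)
        (((hQ'cont.mul hg_cont).add
          ((continuous_const.mul hQcont).mul hφ_cont)).intervalIntegrable a b)
    rw [intervalIntegral.integral_sub hi1 hi2] at E1
    rw [intervalIntegral.integral_add hi3 hi2] at E2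
    have hpos : 0 ≤ ∫ x in a..b, Q' x * g x := by
      refine intervalIntegral.integral_nonneg hab fun x _ => ?_
      exact mul_nonneg (hQ'nonneg x) (by rw [hgdef]; exact Complex.normSq_nonneg _)
    linarith
  -- conclusion
  have hS : Tendsto (fun R : ℝ => ∫ x in (-R)..R, Nu x) atTop (nhds (∫ x, Nu x)) :=
    intervalIntegral_tendsto_integral hNu_int tendsto_neg_atTop_atBot tendsto_id
  have hRHS : Tendsto (fun R : ℝ => φ R - φ (-R)
      + (kinkProfile c R * g R - kinkProfile c (-R) * g (-R))) atTop (nhds 0) := by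
    have h1 := hφ_top.sub (hφ_bot.comp tendsto_neg_atTop_atBot)
    have h2 := hQg_top.sub (hQg_bot.comp tendsto_neg_atTop_atBot)
    simpa using h1.add h2
  have hle : (fun R : ℝ => ∫ x in (-R)..R, Nu x) ≤ᶠ[atTop]
      (fun R : ℝ => φ R - φ (-R) + (kinkProfile c R * g R - kinkProfile c (-R) * g (-R))) := by
    filter_upwards [eventually_ge_atTop (0:ℝ)] with R hR
    exact key (-R) R (by linarith)
  have hS0 : (∫ x, Nu x) ≤ 0 := le_of_tendsto_of_tendsto hS hRHS hle
  have hS0' : 0 ≤ ∫ x, Nu x :=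
    integral_nonneg fun x => by rw [hNudef]; exact Complex.normSq_nonneg _
  have hae : Nu =ᵐ[volume] 0 := by
    refine (integral_eq_zero_iff_of_nonneg ?_ hNu_int).mp (le_antisymm hS0 hS0')
    intro x; rw [hNudef]; exact Complex.normSq_nonneg _
  have hzero : Nu = 0 := (hNu_cont.ae_eq_iff_eq volume continuous_zero).mp hae
  intro x
  have hx : Nu x = 0 := by rw [hzero]; rfl
  rw [hNudef] at hx
  exact Complex.normSq_eq_zero.mp hx
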